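/- For f = 0, q = 1, and γ¹(t,x) = A sin(2πκx¹/L) cos(2πκx²/L) e^{-σ²(2πκ/L)² t}, γ²(t,x) = -A cos(2πκx¹/L) sin(2πκx²/L) e^{-σ²(2πκ/L)² t}, the pair v(t,x) = γ(t,x) w(t), p(t,x) = (A²/4)(cos(4πκx¹/L) + cos(4πκx²/L)) e^{-2σ²(2πκ/L)² t} (w(t))² satisfies the stochastic Navier–Stokes equation dv = [σ²/2 Δv - (v,∇)v - ∇p] dt + γ dw with div v = 0 and v(0,x) = 0. -/

import Mathlib

open Real

/-! Write `c = 2πκ/L`. Each component of `γ` is a Laplacian eigenfunction with eigenvalue `-2c²`,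
and the factor `exp (-σ²c²t)` decays at exactly the rate `(σ²/2)·2c²`, which is the heat equation.
For the advection term the time factor `a = A exp (-σ²c²t) w(t)` only enters squared, and
`sin² + cos² = 1` collapses `(v,∇)v` to `(a²c/2) (sin 2cx¹, sin 2cx²)`, the negative of `∇p`.
The divergence vanishes because `∂₁γ¹ = -∂₂γ²`. -/

theorem taylor_vortex_snse_solution_general
    (A L σ : ℝ) (κ : ℤ)
    (w : ℝ → ℝ) (hw0 : w 0 = 0)
    (γ1 γ2 v1 v2 : ℝ → ℝ → ℝ → ℝ) (p : ℝ → ℝ → ℝ → ℝ)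
    (hγ1 : γ1 = fun t x1 x2 => A * sin (2*π*κ*x1/L) * cos (2*π*κ*x2/L) *
      exp (-σ^2 * (2*π*κ/L)^2 * t))
    (hγ2 : γ2 = fun t x1 x2 => -A * cos (2*π*κ*x1/L) * sin (2*π*κ*x2/L) *
      exp (-σ^2 * (2*π*κ/L)^2 * t))
    (hv1 : v1 = fun t x1 x2 => γ1 t x1 x2 * w t)
    (hv2 : v2 = fun t x1 x2 => γ2 t x1 x2 * w t)
    (hp : p = fun t x1 x2 => A^2/4 * (cos (4*π*κ*x1/L) + cos (4*π*κ*x2/L)) *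
      exp (-2*σ^2 * (2*π*κ/L)^2 * t) * (w t)^2) :
    -- `∂ₜγ = (σ²/2)Δγ`:
    (∀ t x1 x2,
      deriv (fun s => γ1 s x1 x2) t =
        σ^2/2 * (deriv (fun y => deriv (fun z => γ1 t z x2) y) x1 +
                 deriv (fun y => deriv (fun z => γ1 t x1 z) y) x2) ∧
      deriv (fun s => γ2 s x1 x2) t =
        σ^2/2 * (deriv (fun y => deriv (fun z => γ2 t z x2) y) x1 +
                 deriv (fun y => deriv (fun z => γ2 t x1 z) y) x2)) ∧
    -- `(v,∇)v + ∇p = 0`: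
    (∀ t x1 x2,
      v1 t x1 x2 * deriv (fun y => v1 t y x2) x1 +
        v2 t x1 x2 * deriv (fun y => v1 t x1 y) x2 +
        deriv (fun y => p t y x2) x1 = 0 ∧
      v1 t x1 x2 * deriv (fun y => v2 t y x2) x1 +
        v2 t x1 x2 * deriv (fun y => v2 t x1 y) x2 +
        deriv (fun y => p t x1 y) x2 = 0) ∧
    -- `div v = 0`:
    (∀ t x1 x2,
      deriv (fun y => v1 t y x2) x1 + deriv (fun y => v2 t x1 y) x2 = 0) ∧
    -- `v(0,x) = 0`:
    (∀ x1 x2, v1 0 x1 x2 = 0 ∧ v2 0 x1 x2 = 0) := by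
  subst hv1 hv2 hp hγ1 hγ2
  set c : ℝ := 2*π*κ/L
  have hc (x : ℝ) : 2*π*κ*x/L = c*x := by ring
  have h2c (x : ℝ) : 4*π*κ*x/L = 2*c*x := by ring
  have hsin2 (x : ℝ) : sin (2*c*x) = 2 * sin (c*x) * cos (c*x) := by rw [mul_assoc, sin_two_mul]
  have hexp (t : ℝ) : exp (-2*σ^2*c^2*t) = exp (-σ^2*c^2*t)^2 := by rw [← exp_nat_mul]; ring_nf
  simp only [hc, h2c, deriv_mul_const_field, deriv_const_mul_field, deriv_const_add, deriv_add_const,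
    deriv.fun_neg, deriv_comp_mul_left, Real.deriv_sin, Real.deriv_cos', Real.deriv_exp, smul_eq_mul,
    hsin2, hexp]
  refine ⟨fun t x1 x2 => ⟨by ring, by ring⟩, fun t x1 x2 => ⟨?_, ?_⟩, fun t x1 x2 => by ring,
    fun x1 x2 => by simp [hw0]⟩
  · linear_combination
      A^2*c*sin (c*x1)*cos (c*x1)*exp (-σ^2*c^2*t)^2*(w t)^2 * sin_sq_add_cos_sq (c*x2)
  · linear_combination
      A^2*c*sin (c*x2)*cos (c*x2)*exp (-σ^2*c^2*t)^2*(w t)^2 * sin_sq_add_cos_sq (c*x1)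

/-- First model problem: with `f = 0`, `q = 1`, and
`γ¹ = A sin(2πκx¹/L) cos(2πκx²/L) e^{-σ²(2πκ/L)²t}`,
`γ² = -A cos(2πκx¹/L) sin(2πκx²/L) e^{-σ²(2πκ/L)²t}`,
the pair `v = γ w(t)`, `p = (A²/4)(cos(4πκx¹/L) + cos(4πκx²/L)) e^{-2σ²(2πκ/L)²t} w(t)²`
satisfies the SNSE `dv = [σ²/2 Δv - (v,∇)v - ∇p] dt + γ dw`, `div v = 0`, `v(0,·) = 0`;
via Itô's formula this amounts to: `∂ₜγ = (σ²/2)Δγ` (heat equation),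
`(v,∇)v + ∇p = 0`, `div v = 0`, and `v(0,x) = 0`. -/
theorem taylor_vortex_snse_solution
    (A L σ : ℝ) (κ : ℤ) (hL : 0 < L) (hσ : 0 < σ)
    (w : ℝ → ℝ) (hw0 : w 0 = 0)
    (γ1 γ2 v1 v2 : ℝ → ℝ → ℝ → ℝ) (p : ℝ → ℝ → ℝ → ℝ)
    (hγ1 : γ1 = fun t x1 x2 => A * sin (2*π*κ*x1/L) * cos (2*π*κ*x2/L) *
      exp (-σ^2 * (2*π*κ/L)^2 * t))
    (hγ2 : γ2 = fun t x1 x2 => -A * cos (2*π*κ*x1/L) * sin (2*π*κ*x2/L) *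
      exp (-σ^2 * (2*π*κ/L)^2 * t))
    (hv1 : v1 = fun t x1 x2 => γ1 t x1 x2 * w t)
    (hv2 : v2 = fun t x1 x2 => γ2 t x1 x2 * w t)
    (hp : p = fun t x1 x2 => A^2/4 * (cos (4*π*κ*x1/L) + cos (4*π*κ*x2/L)) *
      exp (-2*σ^2 * (2*π*κ/L)^2 * t) * (w t)^2) :
    -- `∂ₜγ = (σ²/2)Δγ`:
    (∀ t x1 x2,
      deriv (fun s => γ1 s x1 x2) t =
        σ^2/2 * (deriv (fun y => deriv (fun z => γ1 t z x2) y) x1 +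
                 deriv (fun y => deriv (fun z => γ1 t x1 z) y) x2) ∧
      deriv (fun s => γ2 s x1 x2) t =
        σ^2/2 * (deriv (fun y => deriv (fun z => γ2 t z x2) y) x1 +
                 deriv (fun y => deriv (fun z => γ2 t x1 z) y) x2)) ∧
    -- `(v,∇)v + ∇p = 0`:
    (∀ t x1 x2,
      v1 t x1 x2 * deriv (fun y => v1 t y x2) x1 +
        v2 t x1 x2 * deriv (fun y => v1 t x1 y) x2 +
        deriv (fun y => p t y x2) x1 = 0 ∧
      v1 t x1 x2 * deriv (fun y => v2 t y x2) x1 +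
        v2 t x1 x2 * deriv (fun y => v2 t x1 y) x2 +
        deriv (fun y => p t x1 y) x2 = 0) ∧
    -- `div v = 0`:
    (∀ t x1 x2,
      deriv (fun y => v1 t y x2) x1 + deriv (fun y => v2 t x1 y) x2 = 0) ∧
    -- `v(0,x) = 0`:
    (∀ x1 x2, v1 0 x1 x2 = 0 ∧ v2 0 x1 x2 = 0) :=
  taylor_vortex_snse_solution_general A L σ κ w hw0 γ1 γ2 v1 v2 p hγ1 hγ2 hv1 hv2 hp
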